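/- arXiv:0711.0596 — 6 statements merged into one kernel-verified Lean document; each statement's English description precedes it below -/
import Mathlib

section
/- Let n and k be natural numbers with 0 < k < n, and let a_{k+1}, …, a_n be integers ≥ 1. Let S be the presented commutative monoid ⟨u₁,…,uₙ | u₁⋯u_k = u_{k+1}^{a_{k+1}}⋯u_n^{a_n}⟩, i.e. the quotient of (Fin n →₀ ℕ) by the additive congruence generated by the single pair (w₁, w₂), where w₁ = e₁ + ⋯ + e_k and w₂ = a_{k+1}·e_{k+1} + ⋯ + a_n·e_n. In the free abelian monoid (Fin k × Fin (n−k) →₀ ℕ) with standard generators x_{i,l} (1 ≤ i ≤ k, 1 ≤ l ≤ n−k), define v_j = a_{k+1}·x_{j,1} + a_{k+2}·x_{j,2} + ⋯ + a_n·x_{j,n−k} for 1 ≤ j ≤ k, and v_{k+l} = x_{1,l} + x_{2,l} + ⋯ + x_{k,l} for 1 ≤ l ≤ n−k. Let f : (Fin n →₀ ℕ) →+ (Fin k × Fin (n−k) →₀ ℕ) be the additive monoid homomorphism with f(e_j) = v_j for all j. Then f(w₁) = f(w₂), so f factors through the quotient map π, and the induced additive monoid homomorphism S →+ (Fin k ×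 Fin (n−k) →₀ ℕ) is injective; in particular S is cancellative and is isomorphic to the submonoid of (Fin k × Fin (n−k) →₀ ℕ) generated by v₁, …, vₙ. -/
/-!
The homomorphism `f` sends `x` to the word whose `(i, l)` coordinate is `x_i a_{k+l} + x_{k+l}`.
If `f x = f y` and, say, `x_1 = y_1 + d`, the coordinates `(1, l)` give
`y_{k+l} = x_{k+l} + d a_{k+l}`, and then the coordinates `(i, 1)` give `x_i = y_i + d`, because
`a_{k+1} ≥ 1` can be cancelled. So `x = z + d w₁` and `y = z + d w₂`: the kernel congruence of `f`
is generated by `(w₁, w₂)`, and the rest is the first isomorphism theorem for monoid congruences.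
-/

/-- The word `w₁ = e₁ + ⋯ + e_k` in the free abelian monoid `Fin n →₀ ℕ`. -/
noncomputable def wordOne (n k : ℕ) : Fin n →₀ ℕ :=
  Finsupp.equivFunOnFinite.symm fun i => if i.val < k then 1 else 0

/-- The word `w₂ = a_{k+1}·e_{k+1} + ⋯ + a_n·e_n` in the free abelian monoid `Fin n →₀ ℕ`. -/
noncomputable def wordTwo (n k : ℕ) (a : Fin n → ℕ) : Fin n →₀ ℕ :=
  Finsupp.equivFunOnFinite.symm fun i => if k ≤ i.val then a i else 0

/-- The elements `v₁, …, vₙ` of the free abelian monoid of rank `k(n-k)`: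
for `j < k`, `v_j = ∑_l a_{k+l} · x_{j,l}`, and for `j ≥ k`,
`v_j = ∑_i x_{i, j-k}`. -/
noncomputable def vWord (n k : ℕ) (a : Fin n → ℕ) (j : Fin n) :
    Fin k × Fin (n - k) →₀ ℕ :=
  Finsupp.equivFunOnFinite.symm fun p =>
    if j.val < k then (if p.1.val = j.val then a ⟨k + p.2.val, by have := p.2.isLt; omega⟩ else 0)
    else (if p.2.val = j.val - k then 1 else 0)

open Finsupp

noncomputable abbrev vWordHom (n k : ℕ) (a : Fin n → ℕ) :
    (Fin n →₀ ℕ) →+ (Fin k × Fin (n - k) →₀ ℕ) :=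
  liftAddHom fun j => multiplesHom _ (vWord n k a j)

theorem Finsupp.mrange_liftAddHom_multiplesHom {ι M : Type*} [AddCommMonoid M] (v : ι → M) :
    AddMonoidHom.mrange (liftAddHom fun j => multiplesHom M (v j)) =
      AddSubmonoid.closure (Set.range v) := by
  apply le_antisymm
  · rintro _ ⟨x, rfl⟩
    exact sum_mem fun j _ =>
      AddSubmonoid.nsmul_mem _ (AddSubmonoid.subset_closure (Set.mem_range_self j)) _
  · rw [AddSubmonoid.closure_le]
    rintro _ ⟨j, rfl⟩
    exact AddMonoidHom.mem_mrange.mpr ⟨single j 1, by simp⟩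

section

variable {n k : ℕ} {a : Fin n → ℕ}

theorem vWord_apply (j : Fin n) (p : Fin k × Fin (n - k)) :
    vWord n k a j p =
      if j.val < k then (if p.1.val = j.val then a ⟨k + p.2, by omega⟩ else 0)
      else (if p.2.val = j.val - k then 1 else 0) := by
  simp [vWord]

theorem wordOne_apply (i : Fin n) : wordOne n k i = if i.val < k then 1 else 0 := by
  simp [wordOne]

theorem wordTwo_apply (i : Fin n) : wordTwo n k a i = if k ≤ i.val then a i else 0 := by
  simp [wordTwo]

theorem vWordHom_apply (hkn : k < n) (x : Fin n →₀ ℕ) (i : Fin k) (l : Fin (n - k)) :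
    vWordHom n k a x (i, l) =
      x ⟨i, i.isLt.trans hkn⟩ * a ⟨k + l, by omega⟩ + x ⟨k + l, by omega⟩ := by
  classical
  have hterm : ∀ j : Fin n, (x j • vWord n k a j) (i, l) =
      (if j = ⟨i, i.isLt.trans hkn⟩ then x j * a ⟨k + l, by omega⟩ else 0) +
        (if j = ⟨k + l, by omega⟩ then x j else 0) := by
    intro j
    simp only [Finsupp.smul_apply, vWord_apply, smul_eq_mul, Fin.ext_iff]
    split_ifs <;> omega
  rw [liftAddHom_apply, sum_fintype _ _ (by simp), finsetSum_apply]
  simp only [multiplesHom_apply, hterm, Finset.sum_add_distrib, Finset.sum_ite_eq',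
    Finset.mem_univ, if_true]

theorem vWordHom_apply_of_lt_of_le (hkn : k < n) (x : Fin n →₀ ℕ) (i j : Fin n)
    (hi : i.val < k) (hj : k ≤ j.val) :
    vWordHom n k a x (⟨i, hi⟩, ⟨j - k, by omega⟩) = x i * a j + x j := by
  have hj' : (⟨k + (j - k), by omega⟩ : Fin n) = j := Fin.ext (by simp; omega)
  rw [vWordHom_apply hkn, hj']

theorem vWordHom_wordOne_eq_wordTwo (hkn : k < n) :
    vWordHom n k a (wordOne n k) = vWordHom n k a (wordTwo n k a) := by
  refine Finsupp.ext fun ⟨i, l⟩ => ?_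
  rw [vWordHom_apply hkn, vWordHom_apply hkn]
  simp [wordOne_apply, wordTwo_apply, i.isLt]

theorem exists_add_nsmul_wordOne_wordTwo {x y : Fin n →₀ ℕ} {d : ℕ}
    (hleft : ∀ i : Fin n, i.val < k → x i = y i + d)
    (hright : ∀ j : Fin n, k ≤ j.val → y j = x j + d * a j) :
    ∃ z, x = z + d • wordOne n k ∧ y = z + d • wordTwo n k a := by
  refine ⟨equivFunOnFinite.symm fun j => if j.val < k then y j else x j, ?_, ?_⟩ <;> ext j <;>
    by_cases hj : j.val < k
  · simp [wordOne_apply, hj, hleft]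
  · simp [wordOne_apply, hj]
  · simp [wordTwo_apply, hj, hj.not_ge]
  · simp [wordTwo_apply, hj, not_lt.mp hj, hright, mul_comm]

theorem addConGen_wordOne_wordTwo_eq_ker (hk : 0 < k) (hkn : k < n)
    (ha : ∀ i : Fin n, k ≤ i.val → 1 ≤ a i) :
    addConGen (fun x y => x = wordOne n k ∧ y = wordTwo n k a) = AddCon.ker (vWordHom n k a) := by
  refine le_antisymm (AddCon.addConGen_le.mpr ?_) fun x y hxy => ?_
  · rintro _ _ ⟨rfl, rfl⟩
    exact vWordHom_wordOne_eq_wordTwo hkn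
  let i₀ : Fin n := ⟨0, hk.trans hkn⟩
  let j₀ : Fin n := ⟨k, hkn⟩
  wlog hle : y i₀ ≤ x i₀ generalizing x y
  · exact AddCon.symm _ (this y x (AddCon.symm _ hxy) (le_of_not_ge hle))
  obtain ⟨d, hd⟩ := Nat.exists_eq_add_of_le hle
  have hcoord : ∀ i j : Fin n, i.val < k → k ≤ j.val →
      x i * a j + x j = y i * a j + y j := fun i j hi hj => by
    rw [← vWordHom_apply_of_lt_of_le hkn x i j hi hj,
      ← vWordHom_apply_of_lt_of_le hkn y i j hi hj, (AddCon.ker_rel _).mp hxy]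
  have hright : ∀ j : Fin n, k ≤ j.val → y j = x j + d * a j := fun j hj => by
    have := hcoord i₀ j hk hj
    rw [hd, add_mul] at this
    omega
  have hleft : ∀ i : Fin n, i.val < k → x i = y i + d := fun i hi => by
    have := hcoord i j₀ hi le_rfl
    rw [hright j₀ le_rfl, add_comm (x j₀), ← add_assoc, ← add_mul] at this
    exact Nat.eq_of_mul_eq_mul_right (ha j₀ le_rfl) (Nat.add_right_cancel this)
  obtain ⟨z, rfl, rfl⟩ := exists_add_nsmul_wordOne_wordTwo hleft hright
  exact AddCon.add _ (AddCon.refl _ z) (AddCon.nsmul _ d (AddConGen.Rel.of _ _ ⟨rfl, rfl⟩))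

end

theorem stmt0 (n k : ℕ) (hk : 0 < k) (hkn : k < n) (a : Fin n → ℕ)
    (ha : ∀ i : Fin n, k ≤ i.val → 1 ≤ a i)
    (c : AddCon (Fin n →₀ ℕ))
    (hc : c = addConGen (fun x y => x = wordOne n k ∧ y = wordTwo n k a))
    (f : (Fin n →₀ ℕ) →+ (Fin k × Fin (n - k) →₀ ℕ))
    (hf : f = Finsupp.liftAddHom fun j => multiplesHom _ (vWord n k a j)) :
    f (wordOne n k) = f (wordTwo n k a) ∧
    (∀ g : c.Quotient →+ (Fin k × Fin (n - k) →₀ ℕ),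
      (∀ x : Fin n →₀ ℕ, g (c.mk' x) = f x) →
      Function.Injective g ∧
      AddMonoidHom.mrange g = AddSubmonoid.closure (Set.range (vWord n k a))) ∧
    (∀ s t r : c.Quotient, s + t = s + r → t = r) ∧
    Nonempty (c.Quotient ≃+ AddSubmonoid.closure (Set.range (vWord n k a))) := by
  obtain rfl : f = vWordHom n k a := hf
  obtain rfl : c = AddCon.ker (vWordHom n k a) :=
    hc.trans (addConGen_wordOne_wordTwo_eq_ker hk hkn ha)
  have hrange := mrange_liftAddHom_multiplesHom (vWord n k a)
  refine ⟨vWordHom_wordOne_eq_wordTwo hkn, fun g hg => ?_, fun s t r h => ?_,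
    ⟨(AddCon.quotientKerEquivRange _).trans (AddEquiv.addSubmonoidCongr hrange)⟩⟩
  · obtain rfl : g = AddCon.kerLift (vWordHom n k a) :=
      AddCon.lift_unique _ g (AddMonoidHom.ext hg)
    exact ⟨AddCon.kerLift_injective _, AddCon.kerLift_range_eq.trans hrange⟩
  · refine AddCon.kerLift_injective _ (add_left_cancel (a := AddCon.kerLift _ s) ?_)
    rw [← map_add, ← map_add, h]
end

section
/- Let n and k be natural numbers with 0 < k < n, and let a_{k+1}, …, a_n be integers ≥ 1. In the free abelian monoid (Fin k × Fin (n−k) →₀ ℕ) with standard generators x_{i,l}, define v_j = a_{k+1}·x_{j,1} + ⋯ + a_n·x_{j,n−k} for 1 ≤ j ≤ k and v_{k+l} = x_{1,l} + ⋯ + x_{k,l} for 1 ≤ l ≤ n−k. Then the submonoid V generated by v₁, …, vₙ is normal in the sense that V = VV^{−1} ∩ ℕ^{k(n−k)}: that is, for every x ∈ (Fin k × Fin (n−k) →₀ ℕ), if the image of x in the free abelian group (Fin k × Fin (n−k) →₀ ℤ) lies in the subgroup generated by the images of v₁, …, vₙ, then x lies in the additive submonoid generated by v₁, …, vₙ.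 -/
/-- The canonical embedding of the free abelian monoid into the free abelian group. -/
noncomputable def toIntHom (m : Type*) : (m →₀ ℕ) →+ (m →₀ ℤ) :=
  Finsupp.mapRange.addMonoidHom (Nat.castAddMonoidHom ℤ)

theorem exists_nat_rank_one_add_of_int {ι κ : Type*} [Fintype ι] (A : κ → ℕ) (x : ι × κ → ℕ)
    (C : ι → ℤ) (D : κ → ℤ)
    (hx : ∀ i l, (x (i, l) : ℤ) = C i * A l + D l) :
    ∃ (C' : ι → ℕ) (D' : κ → ℕ), ∀ i l, x (i, l) = C' i * A l + D' l := by
  rcases isEmpty_or_nonempty ι with hι | hι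
  · exact ⟨0, 0, fun i => isEmptyElim i⟩
  obtain ⟨i₀, -, hi₀⟩ := Finset.exists_mem_eq_inf' Finset.univ_nonempty C
  set m := Finset.univ.inf' Finset.univ_nonempty C
  have hC : ∀ i, 0 ≤ C i - m := fun i => sub_nonneg.mpr (Finset.inf'_le C (Finset.mem_univ i))
  have hD : ∀ l, 0 ≤ D l + m * A l := fun l => by
    rw [hi₀, ← add_comm, ← hx i₀ l]
    exact Int.natCast_nonneg _
  refine ⟨fun i => (C i - m).toNat, fun l => (D l + m * A l).toNat, fun i l => ?_⟩
  have := hx i l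
  zify
  rw [Int.toNat_of_nonneg (hC i), Int.toNat_of_nonneg (hD l)]
  linarith

section RowColumn

variable {ι κ : Type*} [Fintype ι] [Fintype κ] [DecidableEq ι] [DecidableEq κ]

noncomputable def rowColWord (A : κ → ℕ) : ι ⊕ κ → ι × κ →₀ ℕ
  | .inl i => Finsupp.equivFunOnFinite.symm fun p => if p.1 = i then A p.2 else 0
  | .inr l => Finsupp.equivFunOnFinite.symm fun p => if p.2 = l then 1 else 0

theorem sum_mul_rowColWord_apply {R : Type*} [CommSemiring R] (A : κ → ℕ) (c : ι ⊕ κ → R)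
    (i : ι) (l : κ) :
    ∑ s, c s * (rowColWord A s (i, l) : R) = c (.inl i) * A l + c (.inr l) := by
  simp [rowColWord, Fintype.sum_sum_type]

theorem mem_closure_rowColWord_of_mem_closure_toIntHom (A : κ → ℕ) (x : ι × κ →₀ ℕ)
    (hx : toIntHom _ x ∈ AddSubgroup.closure (Set.range fun s => toIntHom _ (rowColWord A s))) :
    x ∈ AddSubmonoid.closure (Set.range (rowColWord A)) := by
  rw [← Submodule.span_int_eq_addSubgroupClosure, Submodule.mem_toAddSubgroup,
    Submodule.mem_span_range_iff_exists_fun] at hx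
  obtain ⟨c, hc⟩ := hx
  have hcoord : ∀ i l, (x (i, l) : ℤ) = c (.inl i) * A l + c (.inr l) := fun i l => by
    rw [← sum_mul_rowColWord_apply]
    simpa [toIntHom, Finsupp.finsetSum_apply] using (DFunLike.congr_fun hc (i, l)).symm
  obtain ⟨C, D, hCD⟩ := exists_nat_rank_one_add_of_int A x _ _ hcoord
  rw [← Submodule.span_nat_eq_addSubmonoidClosure, Submodule.mem_toAddSubmonoid,
    Submodule.mem_span_range_iff_exists_fun]
  refine ⟨Sum.elim C D, Finsupp.ext fun ⟨i, l⟩ => ?_⟩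
  rw [hCD, Finsupp.finsetSum_apply]
  simpa using sum_mul_rowColWord_apply A (Sum.elim C D) i l

end RowColumn

theorem range_vWord (n k : ℕ) (hkn : k ≤ n) (a : Fin n → ℕ) :
    Set.range (vWord n k a) =
      Set.range (rowColWord (ι := Fin k) fun l : Fin (n - k) => a ⟨k + l, by omega⟩) := by
  let e := finSumFinEquiv.trans (finCongr (Nat.add_sub_cancel' hkn))
  have hv : vWord n k a ∘ e = rowColWord fun l : Fin (n - k) => a ⟨k + l, by omega⟩ := by
    ext (i | l) ⟨i', l'⟩ <;> simp [e, vWord, rowColWord, Fin.ext_iff, eq_comm]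
  rw [← hv, e.surjective.range_comp]

theorem stmt1_general (n k : ℕ) (hkn : k < n) (a : Fin n → ℕ)
    (x : Fin k × Fin (n - k) →₀ ℕ)
    (hx : toIntHom (Fin k × Fin (n - k)) x ∈
      AddSubgroup.closure (Set.range fun j => toIntHom (Fin k × Fin (n - k)) (vWord n k a j))) :
    x ∈ AddSubmonoid.closure (Set.range (vWord n k a)) := by
  rw [show (fun j => toIntHom _ (vWord n k a j)) = toIntHom _ ∘ vWord n k a from rfl,
    Set.range_comp, range_vWord n k hkn.le, ← Set.range_comp] at hx
  rw [range_vWord n k hkn.le]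
  exact mem_closure_rowColWord_of_mem_closure_toIntHom _ x hx

theorem stmt1 (n k : ℕ) (hk : 0 < k) (hkn : k < n) (a : Fin n → ℕ)
    (ha : ∀ i : Fin n, k ≤ i.val → 1 ≤ a i)
    (x : Fin k × Fin (n - k) →₀ ℕ)
    (hx : toIntHom (Fin k × Fin (n - k)) x ∈
      AddSubgroup.closure (Set.range fun j => toIntHom (Fin k × Fin (n - k)) (vWord n k a j))) :
    x ∈ AddSubmonoid.closure (Set.range (vWord n k a)) :=
  stmt1_general n k hkn a x hx
end

section
/- Let K be a field, let n and k be natural numbers with 0 < k < n, and let w₁, w₂ ∈ (Fin n →₀ ℕ) be nonzero words with supp(w₁) ⊆ {1,…,k} and supp(w₂) ⊆ {k+1,…,n} (so the supports are disjoint). Let S be the quotient of (Fin n →₀ ℕ) by the additive congruence generated by the single pair (w₁, w₂). Then the following are equivalent: (1) the semigroup algebra K[S] = AddMonoidAlgebra K S is an integral domain and is integrally closed (i.e. K[S] is a normal domain); (2) Hsupp(w₁) = ∅ or Hsupp(w₂) = ∅ (i.e. w₁ is square free or w₂ is square free). -/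
/-!
Since the supports of `w₁` and `w₂` are disjoint, `u` and `v` are identified in `S` exactly when
`u - v ∈ ℤ (w₁ - w₂)`.

If `w₁ ≥ 2 eᵢ` and `w₂ ≥ 2 eⱼ`, then `ζ = x ^ (w₁ - eᵢ) / xⱼ` satisfies
`ζ ^ 2 = x ^ (w₁ - 2 eᵢ + w₂ - 2 eⱼ)`, so it is integral over `K[S]`; but `xⱼ` does not divide
`x ^ (w₁ - eᵢ)` in `K[S]`, as one sees by comparing the `i`- and `j`-coordinates.

If `w₁` is square free and `w₁ i₀ = 1`, solving the relation for `x_{i₀}` embeds `S` into `ℤⁿ`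
as the set of lattice points of a rational polyhedral cone. So `K[S]` is the subring of the
Laurent polynomial ring (a normal domain, being a localization of a polynomial ring) cut out by
finitely many inequalities `l ≥ 0` on exponents. Each of these is preserved under integral
dependence, because the initial degree with respect to `l` is additive on a domain.
-/

/-- The support of a word in the free abelian monoid `Fin n →₀ ℕ`. -/
def supp {n : ℕ} (w : Fin n →₀ ℕ) : Set (Fin n) := {i | w i ≠ 0}

/-- `Hsupp w` is the set of generators occurring in `w` with exponent at least `2`;
`w` is square free iff `Hsupp w = ∅`. -/
def Hsupp {n : ℕ} (w : Fin n →₀ ℕ) : Set (Fin n) := {i | 2 ≤ w i}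

open AddMonoidAlgebra

section Congruence

variable {σ : Type*} {w₁ w₂ : σ →₀ ℕ}

theorem exists_int_of_addConGen_pair {u v : σ →₀ ℕ}
    (h : addConGen (fun x y => x = w₁ ∧ y = w₂) u v) :
    ∃ m : ℤ, ∀ i, (u i : ℤ) - v i = m * (w₁ i - w₂ i) := by
  induction h with
  | of x y hxy => exact ⟨1, fun i => by rw [hxy.1, hxy.2, one_mul]⟩
  | refl x => exact ⟨0, fun i => by rw [sub_self, zero_mul]⟩
  | symm _ ih =>
    obtain ⟨m, hm⟩ := ih
    exact ⟨-m, fun i => by linarith [hm i]⟩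
  | trans _ _ ih ih' =>
    obtain ⟨m, hm⟩ := ih
    obtain ⟨m', hm'⟩ := ih'
    exact ⟨m + m', fun i => by linarith [hm i, hm' i]⟩
  | add _ _ ih ih' =>
    obtain ⟨m, hm⟩ := ih
    obtain ⟨m', hm'⟩ := ih'
    exact ⟨m + m', fun i => by push_cast [Finsupp.add_apply]; linarith [hm i, hm' i]⟩

theorem addConGen_pair_of_nat (hd : ∀ i, w₁ i = 0 ∨ w₂ i = 0) (m : ℕ) {u v : σ →₀ ℕ}
    (h : ∀ i, (u i : ℤ) - v i = m * (w₁ i - w₂ i)) :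
    addConGen (fun x y => x = w₁ ∧ y = w₂) u v := by
  induction m generalizing u with
  | zero =>
    rw [show u = v from Finsupp.ext fun i => by simpa [sub_eq_zero] using h i]
    exact AddCon.refl _ v
  | succ m ih =>
    -- by disjointness `u ≥ w₁`, so one rewriting step `w₁ ↦ w₂` inside `u` lowers `m`
    have hle : w₁ ≤ u := Finsupp.le_def.mpr fun i => by
      have := h i
      rcases hd i with h0 | h0 <;> simp only [h0] at this ⊢ <;> push_cast at this <;> nlinarith
    obtain ⟨t, rfl⟩ := exists_add_of_le hle
    refine AddCon.trans _ (AddCon.add _ (AddConGen.Rel.of _ _ ⟨rfl, rfl⟩) (AddCon.refl _ t))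
      (ih fun i => ?_)
    have := h i
    push_cast [Finsupp.add_apply] at this ⊢
    linarith

theorem addConGen_pair_iff (hd : ∀ i, w₁ i = 0 ∨ w₂ i = 0) {u v : σ →₀ ℕ} :
    addConGen (fun x y => x = w₁ ∧ y = w₂) u v ↔
      ∃ m : ℤ, ∀ i, (u i : ℤ) - v i = m * (w₁ i - w₂ i) := by
  refine ⟨exists_int_of_addConGen_pair, fun ⟨m, hm⟩ => ?_⟩
  obtain ⟨k, rfl | rfl⟩ := Int.eq_nat_or_neg m
  · exact addConGen_pair_of_nat hd k hm
  · exact AddCon.symm _ (addConGen_pair_of_nat hd k fun i => by linarith [hm i])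

theorem addConGen_pair_comm :
    addConGen (fun x y => x = w₁ ∧ y = w₂) = addConGen (fun x y => x = w₂ ∧ y = w₁) := by
  refine le_antisymm (AddCon.addConGen_le.mpr ?_) (AddCon.addConGen_le.mpr ?_) <;>
  · rintro x y ⟨rfl, rfl⟩
    exact AddCon.symm _ (AddConGen.Rel.of _ _ ⟨rfl, rfl⟩)

end Congruence

namespace AddMonoidAlgebra

theorem exists_add_eq_of_single_dvd_single {R M : Type*} [Semiring R] [Nontrivial R]
    [AddCommMonoid M] {s t : M} (h : single s (1 : R) ∣ single t 1) : ∃ v, s + v = t := by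
  classical
  obtain ⟨y, hy⟩ := h
  have ht : t ∈ (single s (1 : R) * y).coeff.support := by simp [← hy]
  obtain ⟨v, -, hv⟩ := Finset.mem_image.mp (support_coeff_single_mul_subset y 1 s ht)
  exact ⟨v, hv⟩

theorem isIntegrallyClosed_of_exists_add_eq {R M G : Type*} [CommRing R] [AddCommMonoid M]
    [AddCommGroup G] [IsDomain R[M]] [IsIntegrallyClosed R[M]] (ι : M →+ G)
    (hι : Function.Injective ι) (hgen : ∀ g, ∃ a b, g + ι b = ι a) :
    IsIntegrallyClosed R[G] := by
  classical
  let := (mapDomainRingHom R ι).toAlgebra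
  have hψ (a : Multiplicative M) : algebraMap R[M] R[G] (of R M a) = single (ι a.toAdd) 1 := by
    simp [RingHom.algebraMap_toAlgebra, of_apply]
  have hR : (1 : R) ≠ 0 := fun h => one_ne_zero (α := R[M]) (by rw [one_def, h, single_zero])
  have : IsLocalization (MonoidHom.mrange (of R M)) R[G] := by
    refine (isLocalization_iff _ _).mpr ⟨?_, fun z => ?_,
      fun {x y} h => ⟨1, by rw [mapDomain_injective hι h]⟩⟩
    · rintro ⟨x, hx⟩
      obtain ⟨a, rfl⟩ := MonoidHom.mem_mrange.mp hx
      refine IsUnit.of_mul_eq_one (single (-ι a.toAdd) 1) ?_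
      rw [hψ, single_mul_single, add_neg_cancel, mul_one, one_def]
    · choose a b hab using hgen
      set b₀ := ∑ g ∈ z.coeff.support, b g with hb₀
      have hshift : ↑(z * single (ι b₀) 1).coeff.support ⊆ Set.range ι := by
        intro x hx
        obtain ⟨g, hg, rfl⟩ := Finset.mem_image.mp (support_coeff_mul_single_subset z 1 _ hx)
        refine ⟨a g + ∑ g' ∈ z.coeff.support.erase g, b g', ?_⟩
        rw [map_add, ← hab, hb₀, ← Finset.add_sum_erase _ _ hg, map_add, add_assoc]
      refine ⟨(comapDomain ι hι (z * single (ι b₀) 1),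
        ⟨_, MonoidHom.mem_mrange.mpr ⟨.ofAdd b₀, rfl⟩⟩), ?_⟩
      simp only [hψ]
      exact (mapDomain_comapDomain hshift hι).symm
  exact isIntegrallyClosed_of_isLocalization R[G] (MonoidHom.mrange (of R M))
    fun x hx => by
      obtain ⟨a, rfl⟩ := MonoidHom.mem_mrange.mp hx
      exact mem_nonZeroDivisors_of_ne_zero (by simpa [of_apply] using hR)

section InfDegree

variable {R G : Type*} [CommRing R] [AddCommMonoid G] (l : G →+ ℤ)

def HasInfDegree (f : R[G]) (r : ℤ) : Prop :=
  f ∈ supported R R {g | r ≤ l g} ∧ ∃ g ∈ f.coeff.support, l g = r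

variable {l}

theorem mul_mem_supported_le {f g : R[G]} {r s t : ℤ} (hf : f ∈ supported R R {a | r ≤ l a})
    (hg : g ∈ supported R R {a | s ≤ l a}) (ht : t ≤ r + s) :
    f * g ∈ supported R R {a | t ≤ l a} := by
  classical
  intro z hz
  obtain ⟨a, ha, b, hb, rfl⟩ := Finset.mem_add.mp (support_coeff_mul_subset f g hz)
  have h₁ : r ≤ l a := hf ha
  have h₂ : s ≤ l b := hg hb
  change t ≤ l (a + b)
  rw [map_add]
  omega

theorem exists_hasInfDegree {f : R[G]} (hf : f ≠ 0) : ∃ r, HasInfDegree l f r := by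
  obtain ⟨g, hg, hmin⟩ := f.coeff.support.exists_min_image l
    (Finsupp.support_nonempty_iff.mpr (mt coeff_eq_zero.mp hf))
  exact ⟨l g, fun a ha => hmin a ha, g, hg, rfl⟩

theorem HasInfDegree.exists_add {f : R[G]} {r : ℤ} (hf : HasInfDegree l f r) :
    ∃ f₀ f₁, f = f₀ + f₁ ∧ f₀ ≠ 0 ∧ (∀ a ∈ f₀.coeff.support, l a = r) ∧
      f₁ ∈ supported R R {a | r + 1 ≤ l a} := by
  classical
  obtain ⟨hle, g, hg, hgr⟩ := hf
  refine ⟨ofCoeff (f.coeff.filter (l · = r)), ofCoeff (f.coeff.filter (l · ≠ r)),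
    congrArg ofCoeff (f.coeff.filter_add_filter_not _).symm, fun h => ?_, fun a ha => ?_,
    mem_supported.mpr fun a ha => ?_⟩
  · have := DFunLike.congr_fun (ofCoeff_eq_zero.mp h) g
    rw [Finsupp.filter_apply, if_pos hgr] at this
    exact Finsupp.mem_support_iff.mp hg this
  · rw [coeff_ofCoeff, Finsupp.support_filter, Finset.mem_filter] at ha
    exact ha.2
  · rw [Finset.mem_coe, coeff_ofCoeff, Finsupp.support_filter, Finset.mem_filter] at ha
    have : r ≤ l a := hle ha.1
    change r + 1 ≤ l a
    omega

theorem HasInfDegree.mul [NoZeroDivisors R[G]] {f g : R[G]} {r s : ℤ} (hf : HasInfDegree l f r)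
    (hg : HasInfDegree l g s) : HasInfDegree l (f * g) (r + s) := by
  classical
  refine ⟨mul_mem_supported_le hf.1 hg.1 le_rfl, ?_⟩
  obtain ⟨f₀, f₁, rfl, hf₀, hf₀r, hf₁⟩ := hf.exists_add
  obtain ⟨g₀, g₁, rfl, hg₀, hg₀s, hg₁⟩ := hg.exists_add
  obtain ⟨z, hz⟩ := Finsupp.support_nonempty_iff.mpr (mt coeff_eq_zero.mp (mul_ne_zero hf₀ hg₀))
  have hlz : l z = r + s := by
    obtain ⟨a, ha, b, hb, rfl⟩ := Finset.mem_add.mp (support_coeff_mul_subset f₀ g₀ hz)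
    rw [map_add, hf₀r a ha, hg₀s b hb]
  have hrest : f₀ * g₁ + f₁ * (g₀ + g₁) ∈ supported R R {a | r + s + 1 ≤ l a} :=
    add_mem (mul_mem_supported_le (fun a ha => (hf₀r a ha).ge) hg₁ (by omega))
      (mul_mem_supported_le hf₁ (add_mem (fun a ha => (hg₀s a ha).ge)
        (supported_mono (fun a (ha : s + 1 ≤ l a) => (by omega : s ≤ l a)) hg₁)) (by omega))
  refine ⟨z, ?_, hlz⟩
  have hz' : (f₀ * g₁ + f₁ * (g₀ + g₁)).coeff z = 0 := by
    by_contra h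
    have : r + s + 1 ≤ l z := hrest (Finsupp.mem_support_iff.mpr h)
    omega
  rw [show (f₀ + f₁) * (g₀ + g₁) = f₀ * g₀ + (f₀ * g₁ + f₁ * (g₀ + g₁)) by ring,
    Finsupp.mem_support_iff, coeff_add, Finsupp.add_apply, hz', add_zero]
  exact Finsupp.mem_support_iff.mp hz

theorem one_mem_supported_le : (1 : R[G]) ∈ supported R R {a | 0 ≤ l a} := by
  refine mem_supported.mpr fun z hz => ?_
  rw [one_def, coeff_single, Finset.mem_coe] at hz
  rw [Finset.mem_singleton.mp (Finsupp.support_single_subset hz)]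
  exact (map_zero l).ge

theorem pow_mem_supported_le {f : R[G]} {r : ℤ} (hf : f ∈ supported R R {a | r ≤ l a}) (d : ℕ) :
    f ^ d ∈ supported R R {a | d * r ≤ l a} := by
  induction d with
  | zero => simpa using one_mem_supported_le
  | succ d ih => exact pow_succ f d ▸ mul_mem_supported_le ih hf (by push_cast; linarith)

theorem HasInfDegree.pow [NoZeroDivisors R[G]] {f : R[G]} {r : ℤ} (hf : HasInfDegree l f r)
    {d : ℕ} (hd : d ≠ 0) : HasInfDegree l (f ^ d) (d * r) := by
  obtain ⟨d, rfl⟩ := Nat.exists_eq_succ_of_ne_zero hd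
  induction d with
  | zero => simpa using hf
  | succ d ih =>
    rw [pow_succ]
    convert (ih d.succ_ne_zero).mul hf using 1
    push_cast
    ring

theorem mem_supported_of_monic_of_eval_eq_zero [IsDomain R[G]] {p : Polynomial R[G]} (hp : p.Monic)
    (hcoeff : ∀ i, p.coeff i ∈ supported R R {a | 0 ≤ l a}) {y : R[G]} (hy : p.eval y = 0) :
    y ∈ supported R R {a | 0 ≤ l a} := by
  rcases eq_or_ne y 0 with rfl | hy0
  · exact zero_mem _
  obtain ⟨r, hr⟩ := exists_hasInfDegree (l := l) hy0
  suffices hr0 : 0 ≤ r from supported_mono (fun a (ha : r ≤ l a) => (hr0.trans ha : 0 ≤ l a)) hr.1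
  by_contra! hr0
  set d := p.natDegree
  have hd : d ≠ 0 := fun h => by
    rw [(Polynomial.Monic.natDegree_eq_zero hp).mp h, Polynomial.eval_one] at hy
    exact one_ne_zero hy
  have hyd : y ^ d = -∑ i ∈ Finset.range d, p.coeff i * y ^ i := by
    rw [← sub_eq_zero, sub_neg_eq_add, add_comm, ← hy, Polynomial.eval_eq_sum_range,
      Finset.sum_range_succ, hp.coeff_natDegree, one_mul]
  -- if `r < 0`, the other terms of `p.eval y` all have initial degree `≥ i * r > d * r`
  have hbound : y ^ d ∈ supported R R {a | d * r + 1 ≤ l a} := by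
    rw [hyd]
    refine neg_mem (sum_mem fun i hi => mul_mem_supported_le (hcoeff i)
      (pow_mem_supported_le hr.1 i) ?_)
    have : (i : ℤ) + 1 ≤ d := by exact_mod_cast Finset.mem_range.mp hi
    nlinarith
  obtain ⟨z, hz, hzd⟩ := (hr.pow hd).2
  have : d * r + 1 ≤ l z := hbound hz
  omega

end InfDegree

theorem isDomain_and_isIntegrallyClosed_of_range_eq_cone {R S G : Type*} [CommRing R]
    [AddCommMonoid S] [AddCommMonoid G] [IsDomain R[G]] [IsIntegrallyClosed R[G]]
    (ι : S →+ G) (hι : Function.Injective ι) (Λ : Set (G →+ ℤ))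
    (hrange : ∀ g, g ∈ Set.range ι ↔ ∀ l ∈ Λ, 0 ≤ l g) :
    IsDomain R[S] ∧ IsIntegrallyClosed R[S] := by
  classical
  let ψ := mapDomainRingHom R ι
  have hψ : Function.Injective ψ := mapDomain_injective hι
  have : IsDomain R[S] := hψ.isDomain ψ
  let := ψ.toAlgebra
  have : FaithfulSMul R[S] R[G] := (faithfulSMul_iff_algebraMap_injective _ _).mpr hψ
  have hψΛ (x : R[S]) (l) (hl : l ∈ Λ) : ψ x ∈ supported R R {g | 0 ≤ l g} := by
    refine mem_supported.mpr fun z hz => ?_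
    obtain ⟨s, -, rfl⟩ := Finset.mem_image.mp (Finsupp.mapDomain_support hz)
    exact (hrange (ι s)).mp ⟨s, rfl⟩ l hl
  have : IsIntegrallyClosedIn R[S] R[G] := by
    refine isIntegrallyClosedIn_iff.mpr ⟨hψ, fun {y} ⟨p, hp, hpy⟩ => ?_⟩
    have hy (l) (hl : l ∈ Λ) : y ∈ supported R R {g | 0 ≤ l g} :=
      mem_supported_of_monic_of_eval_eq_zero (hp.map ψ)
        (fun i => Polynomial.coeff_map ψ i ▸ hψΛ _ l hl) (by rwa [Polynomial.eval_map])
    exact ⟨comapDomain ι hι y,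
      mapDomain_comapDomain (fun z hz => (hrange z).mpr fun l hl => hy l hl hz) hι⟩
  exact ⟨‹_›, .of_isIntegrallyClosed_of_isIntegrallyClosedIn _ R[G]⟩

end AddMonoidAlgebra

noncomputable abbrev toIntVec {σ : Type*} : (σ →₀ ℕ) →+ (σ →₀ ℤ) :=
  Finsupp.mapRange.addMonoidHom (Nat.castAddMonoidHom ℤ)

@[simp] theorem toIntVec_apply {σ : Type*} (u : σ →₀ ℕ) (i : σ) : toIntVec u i = u i := rfl

theorem toIntVec_injective {σ : Type*} : Function.Injective (toIntVec (σ := σ)) :=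
  Finsupp.mapRange_injective _ (by simp) Nat.cast_injective

theorem isIntegrallyClosed_laurent (K σ : Type*) [Field K] : IsIntegrallyClosed K[σ →₀ ℤ] := by
  have : IsIntegrallyClosed K[σ →₀ ℕ] := inferInstanceAs (IsIntegrallyClosed (MvPolynomial σ K))
  refine isIntegrallyClosed_of_exists_add_eq toIntVec toIntVec_injective fun g =>
    ⟨g.mapRange Int.toNat rfl, g.mapRange (fun x => (-x).toNat) rfl, ?_⟩
  ext i
  simp only [Finsupp.mapRange.addMonoidHom_apply, Nat.coe_castAddMonoidHom,
    Finsupp.mapRange_mapRange, Finsupp.coe_add, Pi.add_apply, Finsupp.mapRange_apply,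
    Function.comp_apply, Int.ofNat_toNat]
  omega

section Elimination

variable {σ : Type*} (w₁ w₂ : σ →₀ ℕ) (i₀ : σ)

/-- Solving the relation `x_{i₀} * x ^ (w₁ - e_{i₀}) = x ^ w₂` for `x_{i₀}`; the image lies in the
hyperplane `g i₀ = 0`. -/
noncomputable def elimHom : (σ →₀ ℕ) →+ (σ →₀ ℤ) where
  toFun u := toIntVec u + (u i₀ : ℤ) • (toIntVec w₂ - toIntVec w₁)
  map_zero' := by simp
  map_add' u v := by
    ext k
    simp only [map_add, Finsupp.coe_add, Pi.add_apply, Finsupp.coe_smul, Finsupp.coe_sub,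
      Pi.smul_apply, Pi.sub_apply, toIntVec_apply, smul_eq_mul]
    push_cast
    ring

def elimCone : Set ((σ →₀ ℤ) →+ ℤ) :=
  {Finsupp.applyAddHom i₀, -Finsupp.applyAddHom i₀} ∪
    (fun p : σ × σ => Finsupp.applyAddHom p.1 + (w₂ p.1 : ℤ) • Finsupp.applyAddHom p.2) ''
      {p | w₁ p.1 = 0 ∧ w₁ p.2 ≠ 0}

variable {w₁ w₂ i₀}

theorem elimHom_apply (u : σ →₀ ℕ) (k : σ) :
    elimHom w₁ w₂ i₀ u k = u k + u i₀ * ((w₂ k : ℤ) - w₁ k) := by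
  simp [elimHom]

theorem elimHom_eq_elimHom_iff (hi₀ : w₁ i₀ = 1) (h₂ : w₂ i₀ = 0) {u v : σ →₀ ℕ} :
    elimHom w₁ w₂ i₀ u = elimHom w₁ w₂ i₀ v ↔
      ∃ m : ℤ, ∀ k, (u k : ℤ) - v k = m * (w₁ k - w₂ k) := by
  refine ⟨fun h => ⟨u i₀ - v i₀, fun k => ?_⟩, fun ⟨m, hm⟩ => Finsupp.ext fun k => ?_⟩
  · have := DFunLike.congr_fun h k
    rw [elimHom_apply, elimHom_apply] at this
    linear_combination this
  · have h₀ := hm i₀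
    rw [hi₀, h₂] at h₀
    rw [elimHom_apply, elimHom_apply]
    linear_combination hm k + ((w₂ k : ℤ) - w₁ k) * h₀

theorem forall_mem_elimCone_iff {g : σ →₀ ℤ} :
    (∀ l ∈ elimCone w₁ w₂ i₀, 0 ≤ l g) ↔
      g i₀ = 0 ∧ ∀ j a, w₁ j = 0 → w₁ a ≠ 0 → 0 ≤ g j + w₂ j * g a := by
  simp only [elimCone, Set.mem_union, Set.mem_insert_iff, Set.mem_singleton_iff, or_imp,
    forall_and, forall_eq, Set.forall_mem_image, Set.mem_ofPred_eq, and_imp, Prod.forall,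
    AddMonoidHom.add_apply, AddMonoidHom.neg_apply, AddMonoidHom.smul_apply,
    Finsupp.applyAddHom_apply, smul_eq_mul, neg_nonneg, ← le_antisymm_iff]
  exact and_congr_left' eq_comm

theorem mem_range_elimHom_iff (hd : ∀ i, w₁ i = 0 ∨ w₂ i = 0) (hsf : ∀ i, w₁ i ≤ 1)
    (hi₀ : w₁ i₀ = 1) {g : σ →₀ ℤ} :
    g ∈ Set.range (elimHom w₁ w₂ i₀) ↔ ∀ l ∈ elimCone w₁ w₂ i₀, 0 ≤ l g := by
  have hw₁ (a : σ) (ha : w₁ a ≠ 0) : w₁ a = 1 ∧ w₂ a = 0 :=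
    ⟨le_antisymm (hsf a) (Nat.one_le_iff_ne_zero.mpr ha), (hd a).resolve_left ha⟩
  rw [forall_mem_elimCone_iff]
  constructor
  · rintro ⟨u, rfl⟩
    refine ⟨by simp [elimHom_apply, hi₀, (hw₁ i₀ (by omega)).2], fun j a hj ha => ?_⟩
    simp only [elimHom_apply, hj, (hw₁ a ha).1, (hw₁ a ha).2]
    push_cast
    nlinarith [(u j).cast_nonneg (α := ℤ), (u a).cast_nonneg (α := ℤ), (w₂ j).cast_nonneg (α := ℤ)]
  · rintro ⟨hg₀, hg⟩
    have hne : w₁.support.Nonempty := ⟨i₀, by simp [hi₀]⟩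
    obtain ⟨a, ha, hma⟩ := w₁.support.exists_mem_eq_sup' hne (fun a => -g a)
    set m := w₁.support.sup' hne (fun a => -g a)
    have hpos (k : σ) : 0 ≤ g k + m * ((w₁ k : ℤ) - w₂ k) := by
      by_cases hk : w₁ k = 0
      · have := hg k a hk (Finsupp.mem_support_iff.mp ha)
        rw [hk, hma]
        push_cast
        linarith
      · have := w₁.support.le_sup' (fun a => -g a) (Finsupp.mem_support_iff.mpr hk)
        rw [(hw₁ k hk).1, (hw₁ k hk).2]
        push_cast
        linarith
    refine ⟨(g + m • (toIntVec w₁ - toIntVec w₂)).mapRange Int.toNat rfl, Finsupp.ext fun k => ?_⟩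
    have hu (k : σ) : (((g + m • (toIntVec w₁ - toIntVec w₂)).mapRange Int.toNat rfl) k : ℤ) =
        g k + m * ((w₁ k : ℤ) - w₂ k) := by
      simpa using hpos k
    rw [elimHom_apply, hu, hu, hg₀, hi₀, (hw₁ i₀ (by omega)).2]
    ring

end Elimination

theorem not_isIntegrallyClosed_of_two_le {K σ : Type*} [Field K] {w₁ w₂ : σ →₀ ℕ}
    (hd : ∀ i, w₁ i = 0 ∨ w₂ i = 0) {i j : σ} (hi : 2 ≤ w₁ i) (hj : 2 ≤ w₂ j)
    [IsDomain K[(addConGen (fun x y => x = w₁ ∧ y = w₂)).Quotient]] :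
    ¬ IsIntegrallyClosed K[(addConGen (fun x y => x = w₁ ∧ y = w₂)).Quotient] := by
  intro
  set c := addConGen (fun x y => x = w₁ ∧ y = w₂)
  have hw₁j : w₁ j = 0 := (hd j).resolve_right (by omega)
  have hw₂i : w₂ i = 0 := (hd i).resolve_left (by omega)
  have hij : i ≠ j := by rintro rfl; omega
  let X (u : σ →₀ ℕ) : K[c.Quotient] := single (u : c.Quotient) 1
  have hX (u v : σ →₀ ℕ) : X u * X v = X (u + v) := by simp [X, single_mul_single]
  obtain ⟨a, rfl⟩ := exists_add_of_le (Finsupp.single_le_iff.mpr hi)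
  obtain ⟨b, rfl⟩ := exists_add_of_le (Finsupp.single_le_iff.mpr hj)
  -- `ζ = X (eᵢ + a) / X eⱼ` is integral, as `ζ ^ 2 = X (a + b)`, but does not lie in `K[S]`.
  have hsq : X (Finsupp.single j 1) ^ 2 ∣ X (Finsupp.single i 1 + a) ^ 2 := by
    refine ⟨X (a + b), ?_⟩
    rw [sq, sq, hX, hX, hX]
    refine congrArg (single · 1) (c.eq.mpr ?_)
    have e₁ : Finsupp.single i 1 + a + (Finsupp.single i 1 + a) = Finsupp.single i 2 + a + a := by
      rw [← one_add_one_eq_two, Finsupp.single_add]; abel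
    have e₂ : Finsupp.single j 1 + Finsupp.single j 1 + (a + b) = Finsupp.single j 2 + b + a := by
      rw [← one_add_one_eq_two, Finsupp.single_add]; abel
    rw [e₁, e₂]
    exact c.add (AddConGen.Rel.of _ _ ⟨rfl, rfl⟩) (c.refl a)
  obtain ⟨v, hv⟩ := exists_add_eq_of_single_dvd_single
    ((IsIntegrallyClosed.pow_dvd_pow_iff two_ne_zero).mp hsq)
  obtain ⟨v, rfl⟩ := c.mk'_surjective v
  obtain ⟨m, hm⟩ := (addConGen_pair_iff hd).mp (c.eq.mp hv)
  have h₁ := hm i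
  have h₂ := hm j
  simp only [Finsupp.coe_add, Pi.add_apply, ne_eq, hij, hij.symm, not_false_eq_true,
    Finsupp.single_eq_of_ne, Finsupp.single_eq_same, zero_add, Nat.cast_add, Nat.cast_one,
    Nat.cast_ofNat] at h₁ h₂ hw₁j hw₂i
  have hm : m < 0 := by nlinarith [(v j).cast_nonneg (α := ℤ), (b j).cast_nonneg (α := ℤ)]
  nlinarith [(v i).cast_nonneg (α := ℤ), (a i).cast_nonneg (α := ℤ)]

theorem isDomain_and_isIntegrallyClosed_of_squarefree {K σ : Type*} [Field K] {w₁ w₂ : σ →₀ ℕ}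
    (hd : ∀ i, w₁ i = 0 ∨ w₂ i = 0) (hsf : ∀ i, w₁ i ≤ 1) (hw₁ : w₁ ≠ 0) :
    IsDomain K[(addConGen (fun x y => x = w₁ ∧ y = w₂)).Quotient] ∧
      IsIntegrallyClosed K[(addConGen (fun x y => x = w₁ ∧ y = w₂)).Quotient] := by
  obtain ⟨i₀, hi₀⟩ : ∃ i₀, w₁ i₀ = 1 := by
    obtain ⟨i, hi⟩ := Finsupp.support_nonempty_iff.mpr hw₁
    exact ⟨i, le_antisymm (hsf i) (Nat.one_le_iff_ne_zero.mpr (Finsupp.mem_support_iff.mp hi))⟩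
  have hc : addConGen (fun x y => x = w₁ ∧ y = w₂) = AddCon.ker (elimHom w₁ w₂ i₀) :=
    AddCon.ext fun u v => (addConGen_pair_iff hd).trans
      (elimHom_eq_elimHom_iff hi₀ ((hd i₀).resolve_left (by omega))).symm
  rw [hc]
  have := isIntegrallyClosed_laurent K σ
  refine isDomain_and_isIntegrallyClosed_of_range_eq_cone (AddCon.kerLift _)
    (AddCon.kerLift_injective _) (elimCone w₁ w₂ i₀) fun g => ?_
  rw [← AddMonoidHom.coe_mrange, AddCon.kerLift_range_eq, AddMonoidHom.coe_mrange]
  exact mem_range_elimHom_iff hd hsf hi₀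

theorem isDomain_and_isIntegrallyClosed_iff {K σ : Type*} [Field K] {w₁ w₂ : σ →₀ ℕ}
    (hd : ∀ i, w₁ i = 0 ∨ w₂ i = 0) (hw₁ : w₁ ≠ 0) (hw₂ : w₂ ≠ 0) :
    (IsDomain K[(addConGen (fun x y => x = w₁ ∧ y = w₂)).Quotient] ∧
        IsIntegrallyClosed K[(addConGen (fun x y => x = w₁ ∧ y = w₂)).Quotient]) ↔
      (∀ i, w₁ i ≤ 1) ∨ ∀ i, w₂ i ≤ 1 := by
  refine ⟨fun ⟨_, hint⟩ => ?_, ?_⟩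
  · by_contra! h
    obtain ⟨⟨i, hi⟩, j, hj⟩ := h
    exact not_isIntegrallyClosed_of_two_le hd hi hj hint
  · rintro (hsf | hsf)
    · exact isDomain_and_isIntegrallyClosed_of_squarefree hd hsf hw₁
    · rw [addConGen_pair_comm]
      exact isDomain_and_isIntegrallyClosed_of_squarefree (fun i => (hd i).symm) hsf hw₂

theorem stmt3_general (K : Type*) [Field K] (n k : ℕ)
    (w₁ w₂ : Fin n →₀ ℕ) (hw₁0 : w₁ ≠ 0) (hw₂0 : w₂ ≠ 0)
    (hw₁ : ∀ i, i ∈ supp w₁ → i.val < k) (hw₂ : ∀ i, i ∈ supp w₂ → k ≤ i.val)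
    (c : AddCon (Fin n →₀ ℕ))
    (hc : c = addConGen (fun x y => x = w₁ ∧ y = w₂)) :
    (IsDomain (AddMonoidAlgebra K c.Quotient) ∧
        IsIntegrallyClosed (AddMonoidAlgebra K c.Quotient)) ↔
      (Hsupp w₁ = ∅ ∨ Hsupp w₂ = ∅) := by
  subst hc
  have hd (i : Fin n) : w₁ i = 0 ∨ w₂ i = 0 := by
    by_contra! h
    have h₁ : i.val < k := hw₁ i h.1
    have h₂ : k ≤ i.val := hw₂ i h.2
    omega
  have hsq (w : Fin n →₀ ℕ) : Hsupp w = ∅ ↔ ∀ i, w i ≤ 1 := by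
    simp [Hsupp, Set.eq_empty_iff_forall_notMem]
  rw [hsq, hsq]
  exact isDomain_and_isIntegrallyClosed_iff hd hw₁0 hw₂0

theorem stmt3 (K : Type*) [Field K] (n k : ℕ) (hk : 0 < k) (hkn : k < n)
    (w₁ w₂ : Fin n →₀ ℕ) (hw₁0 : w₁ ≠ 0) (hw₂0 : w₂ ≠ 0)
    (hw₁ : ∀ i, i ∈ supp w₁ → i.val < k) (hw₂ : ∀ i, i ∈ supp w₂ → k ≤ i.val)
    (c : AddCon (Fin n →₀ ℕ))
    (hc : c = addConGen (fun x y => x = w₁ ∧ y = w₂)) :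
    (IsDomain (AddMonoidAlgebra K c.Quotient) ∧
        IsIntegrallyClosed (AddMonoidAlgebra K c.Quotient)) ↔
      (Hsupp w₁ = ∅ ∨ Hsupp w₂ = ∅) :=
  stmt3_general K n k w₁ w₂ hw₁0 hw₂0 hw₁ hw₂ c hc
end

section
/- Let n ≥ 2 and let w₁, w₂, w₃, w₄ ∈ (Fin n →₀ ℕ) be nonzero words such that the two relations (w₁, w₂) and (w₃, w₄) are independent (neither is a consequence of the other, i.e. (w₁,w₂) is not identified by the additive congruence generated by (w₃,w₄) alone, and (w₃,w₄) is not identified by the additive congruence generated by (w₁,w₂) alone) and such that conditions (a)–(d) hold: (a) supp(w₁) ∩ supp(w₂) = ∅ and supp(w₃) ∩ supp(w₄) = ∅; (b) Hsupp(w₁) = ∅ or Hsupp(w₂) = ∅; (c) Hsupp(w₃) = ∅ or Hsupp(w₄) = ∅; (d) with O = {(i,j) : i ∈ {1,2}, j ∈ {3,4}, supp(wᵢ) ∩ supp(w_j) ≠ ∅}, either O = ∅, or O = {(i,j)} is a singleton and Hsupp(w_{i'}) = ∅ or Hsupp(w_{j'}) = ∅ (where i' ∈ {1,2}∖{i}, j'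 ∈ {3,4}∖{j}), or O consists of exactly two pairs sharing a common coordinate and the unique index m occurring in no pair of O satisfies Hsupp(w_m) = ∅. Then the quotient of the free abelian group ℤⁿ = (Fin n → ℤ) by the subgroup generated by the two vectors w₁ − w₂ and w₃ − w₄ is a free abelian group of rank n − 2. -/
/-- The supports of two words intersect nontrivially. -/
def Overlap {n : ℕ} (v w : Fin n →₀ ℕ) : Prop := supp v ∩ supp w ≠ ∅

/-- The two relations `w₁ = w₂` and `w₃ = w₄` are independent: neither is a consequence
of the additive congruence generated by the other alone. -/
def IndependentRels {n : ℕ} (w₁ w₂ w₃ w₄ : Fin n →₀ ℕ) : Prop :=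
  ¬ (addConGen fun x y => x = w₃ ∧ y = w₄) w₁ w₂ ∧
  ¬ (addConGen fun x y => x = w₁ ∧ y = w₂) w₃ w₄

/-- Condition (d) of the two-relator normality criterion, with
`O = {(i,j) : i ∈ {1,2}, j ∈ {3,4}, supp(wᵢ) ∩ supp(w_j) ≠ ∅}`:
either `O = ∅`; or `O` is a singleton `{(i,j)}` and `Hsupp(w_{i'}) = ∅` or
`Hsupp(w_{j'}) = ∅` for the complementary indices `i', j'`; or `O` consists of exactly
two pairs sharing a common coordinate and the unique index `m` occurring in no pair of
`O` satisfies `Hsupp(w_m) = ∅`. -/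
def CondD {n : ℕ} (w₁ w₂ w₃ w₄ : Fin n →₀ ℕ) : Prop :=
  -- O = ∅
  (¬ Overlap w₁ w₃ ∧ ¬ Overlap w₁ w₄ ∧ ¬ Overlap w₂ w₃ ∧ ¬ Overlap w₂ w₄) ∨
  -- O = {(i,j)} a singleton
  (Overlap w₁ w₃ ∧ ¬ Overlap w₁ w₄ ∧ ¬ Overlap w₂ w₃ ∧ ¬ Overlap w₂ w₄ ∧
    (Hsupp w₂ = ∅ ∨ Hsupp w₄ = ∅)) ∨
  (¬ Overlap w₁ w₃ ∧ Overlap w₁ w₄ ∧ ¬ Overlap w₂ w₃ ∧ ¬ Overlap w₂ w₄ ∧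
    (Hsupp w₂ = ∅ ∨ Hsupp w₃ = ∅)) ∨
  (¬ Overlap w₁ w₃ ∧ ¬ Overlap w₁ w₄ ∧ Overlap w₂ w₃ ∧ ¬ Overlap w₂ w₄ ∧
    (Hsupp w₁ = ∅ ∨ Hsupp w₄ = ∅)) ∨
  (¬ Overlap w₁ w₃ ∧ ¬ Overlap w₁ w₄ ∧ ¬ Overlap w₂ w₃ ∧ Overlap w₂ w₄ ∧
    (Hsupp w₁ = ∅ ∨ Hsupp w₃ = ∅)) ∨
  -- O consists of exactly two pairs sharing a common coordinate
  (Overlap w₁ w₃ ∧ Overlap w₁ w₄ ∧ ¬ Overlap w₂ w₃ ∧ ¬ Overlap w₂ w₄ ∧ Hsupp w₂ = ∅) ∨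
  (¬ Overlap w₁ w₃ ∧ ¬ Overlap w₁ w₄ ∧ Overlap w₂ w₃ ∧ Overlap w₂ w₄ ∧ Hsupp w₁ = ∅) ∨
  (Overlap w₁ w₃ ∧ ¬ Overlap w₁ w₄ ∧ Overlap w₂ w₃ ∧ ¬ Overlap w₂ w₄ ∧ Hsupp w₄ = ∅) ∨
  (¬ Overlap w₁ w₃ ∧ Overlap w₁ w₄ ∧ ¬ Overlap w₂ w₃ ∧ Overlap w₂ w₄ ∧ Hsupp w₃ = ∅)


/-!
Write `v = w₁ - w₂` and `u = w₃ - w₄`. Condition (d), together with (b), yields a square-free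
word, say in the first relation, whose support meets none of the other three words; at a
coordinate `i` of its support `v i = ±1` and `u i = 0`. By (a) and (c) the second relation has a
coordinate `j` with `u j = ±1`. Eliminating `x i` with `v` and then `x j` with `u` identifies the
quotient of `ℤⁿ` by `⟨v, u⟩` with the free group on the remaining `n - 2` coordinates.
-/

section Elimination

variable {ι : Type*}

/-- For `v i = ±1`, `u i = 0`, `u j = ±1`: subtract from `x` the multiple of `v` clearing its
`i`-th coordinate, then the multiple of `u` clearing the `j`-th one, and forget both. -/
def pivotElim (v u : ι → ℤ) (i j : ι) : (ι → ℤ) →+ ({k // k ≠ i ∧ k ≠ j} → ℤ) where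
  toFun x k := x k - x i * v i * v k - (x j - x i * v i * v j) * u j * u k
  map_zero' := by ext; simp
  map_add' x y := by ext; simp only [Pi.add_apply]; ring

@[simp]
theorem pivotElim_apply (v u : ι → ℤ) (i j : ι) (x : ι → ℤ) (k : {k // k ≠ i ∧ k ≠ j}) :
    pivotElim v u i j x k = x k - x i * v i * v k - (x j - x i * v i * v j) * u j * u k :=
  rfl

theorem pivotElim_surjective (v u : ι → ℤ) (i j : ι) :
    Function.Surjective (pivotElim v u i j) := by
  classical
  intro y
  refine ⟨fun k => if h : k ≠ i ∧ k ≠ j then y ⟨k, h⟩ else 0, funext fun k => ?_⟩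
  simp [k.2]

theorem ker_pivotElim {v u : ι → ℤ} {i j : ι} (hvi : v i * v i = 1) (hui : u i = 0)
    (huj : u j * u j = 1) : (pivotElim v u i j).ker = AddSubgroup.closure {v, u} := by
  apply le_antisymm
  · intro x hx
    have hx' (k) (hk : k ≠ i ∧ k ≠ j) := congrFun hx ⟨k, hk⟩
    simp only [pivotElim_apply, Pi.zero_apply] at hx'
    refine AddSubgroup.mem_closure_pair.2
      ⟨x i * v i, (x j - x i * v i * v j) * u j, funext fun k => ?_⟩
    simp only [Pi.add_apply, Pi.smul_apply, smul_eq_mul]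
    by_cases hki : k = i
    · subst hki
      linear_combination x k * hvi + (x j - x k * v k * v j) * u j * hui
    by_cases hkj : k = j
    · subst hkj
      linear_combination (x k - x i * v i * v k) * huj
    · linear_combination -hx' k ⟨hki, hkj⟩
  · rw [AddSubgroup.closure_le, Set.insert_subset_iff, Set.singleton_subset_iff]
    constructor <;> ext k
    · simp only [pivotElim_apply, Pi.zero_apply]
      linear_combination (v j * u j * u k - v k) * hvi
    · simp only [pivotElim_apply, Pi.zero_apply, hui]
      linear_combination (-u k) * huj

theorem card_subtype_ne_and_ne [Fintype ι] [DecidableEq ι] {i j : ι} (h : i ≠ j) :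
    Fintype.card {k // k ≠ i ∧ k ≠ j} = Fintype.card ι - 2 := by
  rw [Fintype.card_subtype, ← Finset.card_pair h, ← Finset.card_compl]
  congr 1
  ext k
  simp

theorem nonempty_quotient_closure_pair_addEquiv [Fintype ι] {v u : ι → ℤ} {i j : ι}
    (hvi : IsUnit (v i)) (hui : u i = 0) (huj : IsUnit (u j)) :
    Nonempty (((ι → ℤ) ⧸ AddSubgroup.closure {v, u}) ≃+
      (Fin (Fintype.card ι - 2) → ℤ)) := by
  classical
  have hij : i ≠ j := by rintro rfl; simp [hui] at huj
  rw [← ker_pivotElim (Int.isUnit_mul_self hvi) hui (Int.isUnit_mul_self huj)]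
  exact ⟨(QuotientAddGroup.quotientKerEquivOfSurjective _ (pivotElim_surjective v u i j)).trans
    (AddEquiv.arrowCongr (Fintype.equivFinOfCardEq (card_subtype_ne_and_ne hij))
      (AddEquiv.refl ℤ))⟩

theorem nonempty_quotient_closure_pair_addEquiv_fin {n : ℕ} {v u : Fin n → ℤ} {i j : Fin n}
    (hvi : IsUnit (v i)) (hui : u i = 0) (huj : IsUnit (u j)) :
    Nonempty (((Fin n → ℤ) ⧸ AddSubgroup.closure {v, u}) ≃+ (Fin (n - 2) → ℤ)) := by
  obtain ⟨e⟩ := nonempty_quotient_closure_pair_addEquiv hvi hui huj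
  exact ⟨e.trans
    (AddEquiv.arrowCongr (finCongr (by rw [Fintype.card_fin])) (AddEquiv.refl ℤ))⟩

end Elimination

section Words

variable {n : ℕ}

theorem overlap_comm {v w : Fin n →₀ ℕ} : Overlap v w ↔ Overlap w v := by
  rw [Overlap, Overlap, Set.inter_comm]

theorem apply_eq_zero_of_not_overlap {v w : Fin n →₀ ℕ} (h : ¬ Overlap v w) {i : Fin n}
    (hi : i ∈ supp v) : w i = 0 := by
  by_contra hwi
  exact (not_not.1 h).subset ⟨hi, hwi⟩

theorem sub_apply_eq_zero_of_not_overlap {p a b : Fin n →₀ ℕ} (ha : ¬ Overlap p a)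
    (hb : ¬ Overlap p b) {i : Fin n} (hi : i ∈ supp p) : (a i : ℤ) - b i = 0 := by
  simp [apply_eq_zero_of_not_overlap ha hi, apply_eq_zero_of_not_overlap hb hi]

theorem exists_isUnit_sub_apply_left {a b : Fin n →₀ ℕ} (ha : Hsupp a = ∅) (h0 : a ≠ 0)
    (hab : ¬ Overlap a b) : ∃ i ∈ supp a, IsUnit ((a i : ℤ) - b i) := by
  obtain ⟨i, hi⟩ := Finsupp.ne_iff.1 h0
  have hai : a i = 1 := by
    have : ¬ 2 ≤ a i := Set.eq_empty_iff_forall_notMem.1 ha i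
    simp only [Finsupp.coe_zero, Pi.zero_apply] at hi
    omega
  exact ⟨i, hi, by simp [hai, apply_eq_zero_of_not_overlap hab hi]⟩

theorem exists_isUnit_sub_apply_right {a b : Fin n →₀ ℕ} (hb : Hsupp b = ∅) (h0 : b ≠ 0)
    (hab : ¬ Overlap a b) : ∃ i ∈ supp b, IsUnit ((a i : ℤ) - b i) := by
  obtain ⟨i, hi, hunit⟩ := exists_isUnit_sub_apply_left hb h0 (overlap_comm.not.1 hab)
  exact ⟨i, hi, by simpa using hunit.neg⟩

theorem exists_isUnit_sub_apply {a b : Fin n →₀ ℕ} (h : Hsupp a = ∅ ∨ Hsupp b = ∅)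
    (ha : a ≠ 0) (hb : b ≠ 0) (hab : ¬ Overlap a b) : ∃ i, IsUnit ((a i : ℤ) - b i) := by
  rcases h with h | h
  · obtain ⟨i, -, hi⟩ := exists_isUnit_sub_apply_left h ha hab; exact ⟨i, hi⟩
  · obtain ⟨i, -, hi⟩ := exists_isUnit_sub_apply_right h hb hab; exact ⟨i, hi⟩

theorem squarefree_and_disjoint_of_condD {w₁ w₂ w₃ w₄ : Fin n →₀ ℕ}
    (hb : Hsupp w₁ = ∅ ∨ Hsupp w₂ = ∅) (hd : CondD w₁ w₂ w₃ w₄) :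
    (Hsupp w₁ = ∅ ∧ ¬ Overlap w₁ w₃ ∧ ¬ Overlap w₁ w₄) ∨
    (Hsupp w₂ = ∅ ∧ ¬ Overlap w₂ w₃ ∧ ¬ Overlap w₂ w₄) ∨
    (Hsupp w₃ = ∅ ∧ ¬ Overlap w₃ w₁ ∧ ¬ Overlap w₃ w₂) ∨
    (Hsupp w₄ = ∅ ∧ ¬ Overlap w₄ w₁ ∧ ¬ Overlap w₄ w₂) := by
  rw [overlap_comm (v := w₃), overlap_comm (v := w₃), overlap_comm (v := w₄),
    overlap_comm (v := w₄)]
  unfold CondD at hd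
  tauto

end Words

theorem stmt8_general (n : ℕ)
    (w₁ w₂ w₃ w₄ : Fin n →₀ ℕ)
    (h₁ : w₁ ≠ 0) (h₂ : w₂ ≠ 0) (h₃ : w₃ ≠ 0) (h₄ : w₄ ≠ 0)
    (ha : supp w₁ ∩ supp w₂ = ∅ ∧ supp w₃ ∩ supp w₄ = ∅)
    (hb : Hsupp w₁ = ∅ ∨ Hsupp w₂ = ∅)
    (hcnd : Hsupp w₃ = ∅ ∨ Hsupp w₄ = ∅)
    (hd : CondD w₁ w₂ w₃ w₄)
    (H : AddSubgroup (Fin n → ℤ))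
    (hH : H = AddSubgroup.closure
      {fun i => (w₁ i : ℤ) - (w₂ i : ℤ), fun i => (w₃ i : ℤ) - (w₄ i : ℤ)}) :
    Nonempty (((Fin n → ℤ) ⧸ H) ≃+ (Fin (n - 2) → ℤ)) := by
  subst hH
  have h₁₂ : ¬ Overlap w₁ w₂ := not_not.2 ha.1
  have h₃₄ : ¬ Overlap w₃ w₄ := not_not.2 ha.2
  obtain ⟨i, hi⟩ := exists_isUnit_sub_apply hb h₁ h₂ h₁₂
  obtain ⟨j, hj⟩ := exists_isUnit_sub_apply hcnd h₃ h₄ h₃₄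
  rcases squarefree_and_disjoint_of_condD hb hd with
    ⟨hs, h₁₃, h₁₄⟩ | ⟨hs, h₂₃, h₂₄⟩ | ⟨hs, h₃₁, h₃₂⟩ | ⟨hs, h₄₁, h₄₂⟩
  · obtain ⟨k, hk, hv⟩ := exists_isUnit_sub_apply_left hs h₁ h₁₂
    exact nonempty_quotient_closure_pair_addEquiv_fin hv
      (sub_apply_eq_zero_of_not_overlap h₁₃ h₁₄ hk) hj
  · obtain ⟨k, hk, hv⟩ := exists_isUnit_sub_apply_right hs h₂ h₁₂
    exact nonempty_quotient_closure_pair_addEquiv_fin hv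
      (sub_apply_eq_zero_of_not_overlap h₂₃ h₂₄ hk) hj
  · obtain ⟨k, hk, hu⟩ := exists_isUnit_sub_apply_left hs h₃ h₃₄
    rw [Set.pair_comm]
    exact nonempty_quotient_closure_pair_addEquiv_fin hu
      (sub_apply_eq_zero_of_not_overlap h₃₁ h₃₂ hk) hi
  · obtain ⟨k, hk, hu⟩ := exists_isUnit_sub_apply_right hs h₄ h₃₄
    rw [Set.pair_comm]
    exact nonempty_quotient_closure_pair_addEquiv_fin hu
      (sub_apply_eq_zero_of_not_overlap h₄₁ h₄₂ hk) hi

theorem stmt8 (n : ℕ) (hn : 2 ≤ n)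
    (w₁ w₂ w₃ w₄ : Fin n →₀ ℕ)
    (h₁ : w₁ ≠ 0) (h₂ : w₂ ≠ 0) (h₃ : w₃ ≠ 0) (h₄ : w₄ ≠ 0)
    (hind : IndependentRels w₁ w₂ w₃ w₄)
    (ha : supp w₁ ∩ supp w₂ = ∅ ∧ supp w₃ ∩ supp w₄ = ∅)
    (hb : Hsupp w₁ = ∅ ∨ Hsupp w₂ = ∅)
    (hcnd : Hsupp w₃ = ∅ ∨ Hsupp w₄ = ∅)
    (hd : CondD w₁ w₂ w₃ w₄)
    (H : AddSubgroup (Fin n → ℤ))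
    (hH : H = AddSubgroup.closure
      {fun i => (w₁ i : ℤ) - (w₂ i : ℤ), fun i => (w₃ i : ℤ) - (w₄ i : ℤ)}) :
    Nonempty (((Fin n → ℤ) ⧸ H) ≃+ (Fin (n - 2) → ℤ)) :=
  stmt8_general n w₁ w₂ w₃ w₄ h₁ h₂ h₃ h₄ ha hb hcnd hd H hH
end

section
/- Let n ≥ 2 and let w₁, w₂, w₃, w₄ ∈ (Fin n →₀ ℕ) be nonzero words such that the two relations (w₁, w₂) and (w₃, w₄) are independent (neither is a consequence of the congruence generated by the other alone) and such that conditions (a)–(d) hold: (a) supp(w₁) ∩ supp(w₂) = ∅ and supp(w₃) ∩ supp(w₄) = ∅; (b) Hsupp(w₁) = ∅ or Hsupp(w₂) = ∅; (c) Hsupp(w₃) = ∅ or Hsupp(w₄) = ∅; (d) with O = {(i,j) : i ∈ {1,2}, j ∈ {3,4}, supp(wᵢ) ∩ supp(w_j) ≠ ∅}, either O = ∅, or O = {(i,j)} is a singleton and Hsupp(w_{i'}) = ∅ or Hsupp(w_{j'}) = ∅ (where i' ∈ {1,2}∖{i}, j' ∈ {3,4}∖{j}), or O consists of exactly two pairs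 sharing a common coordinate and the unique index m occurring in no pair of O satisfies Hsupp(w_m) = ∅. Let S be the quotient of (Fin n →₀ ℕ) by the additive congruence generated by the pairs (w₁, w₂) and (w₃, w₄). Then S is a cancellative monoid: for all a, b, c ∈ S, a + b = a + c implies b = c. -/
namespace Finsupp

variable {ι : Type*}

theorem nsmul_le_of_add_eq_add_nsmul {x y a u : ι →₀ ℕ} {t : ℕ} (h : y + a = x + t • u)
    (hua : Disjoint u.support a.support) : t • u ≤ y := by
  refine le_def.2 fun j => ?_
  have hj := DFunLike.congr_fun h j
  simp only [coe_add, coe_smul, Pi.add_apply, Pi.smul_apply, smul_eq_mul] at hj ⊢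
  by_cases hu : u j = 0
  · simp [hu]
  · have ha : a j = 0 := notMem_support_iff.1 (Finset.disjoint_left.1 hua (mem_support_iff.2 hu))
    omega

noncomputable def toIntHom : (ι →₀ ℕ) →+ (ι →₀ ℤ) :=
  mapRange.addMonoidHom (Nat.castAddMonoidHom ℤ)

theorem toIntHom_injective : Function.Injective (toIntHom : (ι →₀ ℕ) →+ (ι →₀ ℤ)) :=
  mapRange_injective _ Nat.cast_zero Nat.cast_injective

end Finsupp

open Finsupp

namespace AddCon

variable {ι : Type*} (c : AddCon (ι →₀ ℕ))

theorem rel_of_add_nsmul_eq {u v x z : ι →₀ ℕ} (huv : c u v) (hd : Disjoint u.support v.support)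
    {t : ℕ} (h : x + t • v = z + t • u) : c x z := by
  obtain ⟨r, rfl⟩ :=
    le_iff_exists_add.1 (nsmul_le_of_add_eq_add_nsmul h (hd.mono_right support_smul))
  obtain rfl : z = t • v + r := add_right_cancel (b := t • u) (by rw [← h]; abel)
  exact c.add (c.nsmul t huv) (c.refl r)

theorem rel_of_add_nsmul_eq_of_isolated {u₁ u₂ u₃ u₄ x y : ι →₀ ℕ}
    (h₁₂ : c u₁ u₂) (h₃₄ : c u₃ u₄)
    (h₂₁ : Disjoint u₂.support u₁.support) (h₂₃ : Disjoint u₂.support u₃.support)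
    (hd₃₄ : Disjoint u₃.support u₄.support) {s t : ℕ}
    (h : x + s • u₂ + t • u₄ = y + s • u₁ + t • u₃) : c x y := by
  classical
  have hd : Disjoint u₂.support (s • u₁ + t • u₃).support :=
    Finset.disjoint_of_subset_right support_add <| Finset.disjoint_union_right.2
      ⟨h₂₁.mono_right support_smul, h₂₃.mono_right support_smul⟩
  obtain ⟨r, rfl⟩ := le_iff_exists_add.1
    (nsmul_le_of_add_eq_add_nsmul (x := x + t • u₄) (y := y) (t := s)
      (by convert h.symm using 1 <;> abel) hd)
  have hx : c x (r + s • u₁) :=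
    c.rel_of_add_nsmul_eq h₃₄ hd₃₄
      (add_left_cancel (a := s • u₂) (by convert h using 1 <;> abel))
  exact c.trans hx (by rw [add_comm (s • u₂)]; exact c.add (c.refl r) (c.nsmul s h₁₂))

theorem rel_of_zsmul_add_zsmul_eq_of_isolated {u₁ u₂ u₃ u₄ : ι →₀ ℕ}
    (h₁₂ : c u₁ u₂) (h₃₄ : c u₃ u₄)
    (h₂₁ : Disjoint u₂.support u₁.support) (h₂₃ : Disjoint u₂.support u₃.support)
    (h₂₄ : Disjoint u₂.support u₄.support) (hd₃₄ : Disjoint u₃.support u₄.support)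
    {x y : ι →₀ ℕ} {s t : ℤ}
    (h : s • (toIntHom u₁ - toIntHom u₂) + t • (toIntHom u₃ - toIntHom u₄) =
      toIntHom x - toIntHom y) : c x y := by
  wlog hs : 0 ≤ s generalizing x y s t
  · refine c.symm (this (s := -s) (t := -t) ?_ (by omega))
    rw [neg_smul, neg_smul, ← neg_add, h, neg_sub]
  lift s to ℕ using hs
  obtain ⟨t, rfl | rfl⟩ := Int.eq_nat_or_neg t
  · refine c.rel_of_add_nsmul_eq_of_isolated h₁₂ h₃₄ h₂₁ h₂₃ hd₃₄ (s := s) (t := t)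
      (toIntHom_injective ?_)
    simp only [map_add, map_nsmul]
    linear_combination (norm := module) -h
  · refine c.rel_of_add_nsmul_eq_of_isolated h₁₂ (c.symm h₃₄) h₂₁ h₂₄ hd₃₄.symm
      (s := s) (t := t) (toIntHom_injective ?_)
    simp only [map_add, map_nsmul]
    linear_combination (norm := module) -h

instance isLeftCancelAdd_quotient_ker {M G : Type*} [AddZeroClass M] [AddZeroClass G]
    [IsLeftCancelAdd G] (f : M →+ G) : IsLeftCancelAdd (ker f).Quotient :=
  (kerLift_injective f).isLeftCancelAdd _ (map_add _)

end AddCon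

section RelationLattice

variable {ι : Type*}

noncomputable def relLatticeHom (u₁ u₂ u₃ u₄ : ι →₀ ℕ) : (ι →₀ ℕ) →+
    (ι →₀ ℤ) ⧸ AddSubgroup.closure {toIntHom u₁ - toIntHom u₂, toIntHom u₃ - toIntHom u₄} :=
  (QuotientAddGroup.mk' _).comp toIntHom

theorem ker_relLatticeHom_iff {u₁ u₂ u₃ u₄ x y : ι →₀ ℕ} :
    AddCon.ker (relLatticeHom u₁ u₂ u₃ u₄) x y ↔ ∃ s t : ℤ,
      s • (toIntHom u₁ - toIntHom u₂) + t • (toIntHom u₃ - toIntHom u₄) =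
        toIntHom x - toIntHom y := by
  rw [AddCon.ker_rel, relLatticeHom, AddMonoidHom.comp_apply, AddMonoidHom.comp_apply,
    QuotientAddGroup.mk'_apply, QuotientAddGroup.mk'_apply, QuotientAddGroup.eq_iff_sub_mem,
    AddSubgroup.mem_closure_pair]

theorem addConGen_le_ker_relLatticeHom (u₁ u₂ u₃ u₄ : ι →₀ ℕ) :
    addConGen (fun x y => (x = u₁ ∧ y = u₂) ∨ (x = u₃ ∧ y = u₄)) ≤
      AddCon.ker (relLatticeHom u₁ u₂ u₃ u₄) := by
  refine AddCon.addConGen_le.2 ?_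
  rintro x y (⟨rfl, rfl⟩ | ⟨rfl, rfl⟩)
  · exact ker_relLatticeHom_iff.2 ⟨1, 0, by simp⟩
  · exact ker_relLatticeHom_iff.2 ⟨0, 1, by simp⟩

end RelationLattice

theorem supp_inter_supp_eq_empty_iff {n : ℕ} {v w : Fin n →₀ ℕ} :
    supp v ∩ supp w = ∅ ↔ Disjoint v.support w.support := by
  rw [← Finset.disjoint_coe, ← Finsupp.fun_support_eq, ← Finsupp.fun_support_eq,
    Set.disjoint_iff_inter_eq_empty]
  rfl

theorem not_overlap_iff {n : ℕ} {v w : Fin n →₀ ℕ} :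
    ¬ Overlap v w ↔ Disjoint v.support w.support :=
  not_not.trans supp_inter_supp_eq_empty_iff

theorem CondD.exists_isolated {n : ℕ} {w₁ w₂ w₃ w₄ : Fin n →₀ ℕ} (hd : CondD w₁ w₂ w₃ w₄) :
    (¬ Overlap w₂ w₃ ∧ ¬ Overlap w₂ w₄) ∨ (¬ Overlap w₁ w₃ ∧ ¬ Overlap w₁ w₄) ∨
      (¬ Overlap w₁ w₃ ∧ ¬ Overlap w₂ w₃) ∨ (¬ Overlap w₁ w₄ ∧ ¬ Overlap w₂ w₄) := by
  unfold CondD at hd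
  tauto

theorem ker_relLatticeHom_le_of_condD {n : ℕ} {w₁ w₂ w₃ w₄ : Fin n →₀ ℕ}
    (c : AddCon (Fin n →₀ ℕ)) (h₁₂ : c w₁ w₂) (h₃₄ : c w₃ w₄)
    (hd₁₂ : Disjoint w₁.support w₂.support) (hd₃₄ : Disjoint w₃.support w₄.support)
    (hd : CondD w₁ w₂ w₃ w₄) : AddCon.ker (relLatticeHom w₁ w₂ w₃ w₄) ≤ c := by
  intro x y hxy
  obtain ⟨s, t, h⟩ := ker_relLatticeHom_iff.1 hxy
  have hiso := hd.exists_isolated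
  simp only [not_overlap_iff] at hiso
  rcases hiso with ⟨h23, h24⟩ | ⟨h13, h14⟩ | ⟨h13, h23⟩ | ⟨h14, h24⟩
  · exact c.rel_of_zsmul_add_zsmul_eq_of_isolated h₁₂ h₃₄ hd₁₂.symm h23 h24 hd₃₄ h
  · exact c.rel_of_zsmul_add_zsmul_eq_of_isolated (c.symm h₁₂) h₃₄ hd₁₂ h13 h14 hd₃₄
      (s := -s) (t := t) (by rw [← h]; module)
  · exact c.rel_of_zsmul_add_zsmul_eq_of_isolated (c.symm h₃₄) h₁₂ hd₃₄ h13.symm h23.symm hd₁₂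
      (s := -t) (t := s) (by rw [← h]; module)
  · exact c.rel_of_zsmul_add_zsmul_eq_of_isolated h₃₄ h₁₂ hd₃₄.symm h14.symm h24.symm hd₁₂
      (s := t) (t := s) (by rw [← h]; module)

theorem stmt9_general (n : ℕ)
    (w₁ w₂ w₃ w₄ : Fin n →₀ ℕ)
    (ha : supp w₁ ∩ supp w₂ = ∅ ∧ supp w₃ ∩ supp w₄ = ∅)
    (hd : CondD w₁ w₂ w₃ w₄)
    (c : AddCon (Fin n →₀ ℕ))
    (hc : c = addConGen (fun x y => (x = w₁ ∧ y = w₂) ∨ (x = w₃ ∧ y = w₄))) :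
    ∀ a b d : c.Quotient, a + b = a + d → b = d := by
  have h₁₂ : c w₁ w₂ := by rw [hc]; exact AddConGen.Rel.of _ _ (Or.inl ⟨rfl, rfl⟩)
  have h₃₄ : c w₃ w₄ := by rw [hc]; exact AddConGen.Rel.of _ _ (Or.inr ⟨rfl, rfl⟩)
  have hker : c = AddCon.ker (relLatticeHom w₁ w₂ w₃ w₄) :=
    le_antisymm (hc ▸ addConGen_le_ker_relLatticeHom w₁ w₂ w₃ w₄)
      (ker_relLatticeHom_le_of_condD c h₁₂ h₃₄ (supp_inter_supp_eq_empty_iff.1 ha.1)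
        (supp_inter_supp_eq_empty_iff.1 ha.2) hd)
  subst hker
  exact fun a b d => add_left_cancel

theorem stmt9 (n : ℕ) (hn : 2 ≤ n)
    (w₁ w₂ w₃ w₄ : Fin n →₀ ℕ)
    (h₁ : w₁ ≠ 0) (h₂ : w₂ ≠ 0) (h₃ : w₃ ≠ 0) (h₄ : w₄ ≠ 0)
    (hind : IndependentRels w₁ w₂ w₃ w₄)
    (ha : supp w₁ ∩ supp w₂ = ∅ ∧ supp w₃ ∩ supp w₄ = ∅)
    (hb : Hsupp w₁ = ∅ ∨ Hsupp w₂ = ∅)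
    (hcnd : Hsupp w₃ = ∅ ∨ Hsupp w₄ = ∅)
    (hd : CondD w₁ w₂ w₃ w₄)
    (c : AddCon (Fin n →₀ ℕ))
    (hc : c = addConGen (fun x y => (x = w₁ ∧ y = w₂) ∨ (x = w₃ ∧ y = w₄))) :
    ∀ a b d : c.Quotient, a + b = a + d → b = d :=
  stmt9_general n w₁ w₂ w₃ w₄ ha hd c hc
end

section
/- Let K be a field and let S be the presented commutative monoid ⟨u₁, u₂, u₃, u₄ | u₁u₂ = u₃², u₁u₃ = u₄²⟩, i.e. the quotient of (Fin 4 →₀ ℕ) by the additive congruence generated by the two pairs (e₁ + e₂, 2·e₃) and (e₁ + e₃, 2·e₄). Then the semigroup algebra K[S] = AddMonoidAlgebra K S is an integral domain but is NOT integrally closed (K[S] is a domain that is not normal). -/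
/-!
Writing `uᵢ₊₁` for `Finsupp.single i 1`, the monoid `S` embeds into `ℤ²` by `u₁ ↦ (1,0)`,
`u₂ ↦ (-3,4)`, `u₃ ↦ (-1,2)`, `u₄ ↦ (0,1)`: rewriting along `u₁u₂ → u₃²`, `u₁u₃ → u₄²`,
`u₃³ → u₂u₄²` strictly decreases the weight `2a + 3b + 2c + d` of `u₁ᵃu₂ᵇu₃ᶜu₄ᵈ` and ends in a
normal form that is determined by the image in `ℤ²`. Hence `S` has unique sums and `K[S]` is a
domain. In the fraction field, `x = u₂u₄ / u₃` satisfies `x² = u₂u₃`, but the degree `(-2,3)` of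
`x` is not in the image of `S`, so `x` is integral over `K[S]` without lying in it.
-/

namespace AddMonoidAlgebra

theorem not_isIntegrallyClosed_of_nsmul_eq {R M : Type*} [CommRing R]
    [AddCommMonoid M] [IsRightCancelAdd M] [IsDomain R[M]]
    {k : ℕ} (hk : k ≠ 0) {m n p : M} (h : k • m = p + k • n) (hm : ∀ s, s + n ≠ m) :
    ¬ IsIntegrallyClosed R[M] := by
  intro _
  set F := FractionRing R[M]
  have hR : (1 : R) ≠ 0 := fun h1 ↦ one_ne_zero (α := R[M]) <| by
    rw [one_def, h1, single_zero]
  have hn : algebraMap R[M] F (single n 1) ≠ 0 :=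
    (map_ne_zero_iff _ (IsFractionRing.injective _ F)).2 (single_eq_zero.not.2 hR)
  have hpow : (algebraMap R[M] F (single m 1) / algebraMap R[M] F (single n 1)) ^ k =
      algebraMap R[M] F (single p 1) := by
    rw [div_pow, div_eq_iff (pow_ne_zero k hn), ← map_pow, ← map_pow, ← map_mul,
      single_pow, single_pow, single_mul_single, h, one_pow, one_mul]
  obtain ⟨y, hy⟩ := IsIntegrallyClosed.exists_algebraMap_eq_of_isIntegral_pow
    (Nat.pos_of_ne_zero hk) (hpow ▸ isIntegral_algebraMap)
  have hyn : y * single n 1 = single m 1 :=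
    IsFractionRing.injective _ F (by rw [map_mul, hy, div_mul_cancel₀ _ hn])
  have hmem : m ∈ (y * single n 1).coeff.support := by
    rw [hyn]
    simp [coeff_single, hR]
  rw [support_coeff_mul_single _ _ (by simp)] at hmem
  obtain ⟨s, -, hs⟩ := Finset.mem_map.1 hmem
  exact hm s hs

end AddMonoidAlgebra

namespace TwoRelationMonoid

open Finsupp

def relations (x y : Fin 4 →₀ ℕ) : Prop :=
  x = single 0 1 + single 1 1 ∧ y = single 2 2 ∨ x = single 0 1 + single 2 1 ∧ y = single 3 2

def embed : (Fin 4 →₀ ℕ) →+ ℤ × ℤ where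
  toFun x := ((x 0 : ℤ) - 3 * x 1 - x 2, 4 * (x 1 : ℤ) + 2 * x 2 + x 3)
  map_zero' := by simp
  map_add' x y := by
    simp only [coe_add, Pi.add_apply, Nat.cast_add, Prod.mk_add_mk, Prod.mk.injEq]
    constructor <;> ring

@[simp] lemma embed_apply (x : Fin 4 →₀ ℕ) :
    embed x = ((x 0 : ℤ) - 3 * x 1 - x 2, 4 * (x 1 : ℤ) + 2 * x 2 + x 3) := rfl

def weight : (Fin 4 →₀ ℕ) →+ ℕ where
  toFun x := 2 * x 0 + 3 * x 1 + 2 * x 2 + x 3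
  map_zero' := rfl
  map_add' x y := by simp only [coe_add, Pi.add_apply]; ring

@[simp] lemma weight_apply (x : Fin 4 →₀ ℕ) :
    weight x = 2 * x 0 + 3 * x 1 + 2 * x 2 + x 3 := rfl

def IsReduced (x : Fin 4 →₀ ℕ) : Prop :=
  (x 1 = 0 ∧ x 2 = 0) ∨ (x 0 = 0 ∧ x 2 < 3)

theorem addConGen_relations_le_ker_embed : addConGen relations ≤ AddCon.ker embed :=
  AddCon.addConGen_le.2 <| by
    rintro x y (⟨rfl, rfl⟩ | ⟨rfl, rfl⟩) <;> simp [AddCon.ker_rel]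

-- `u₃³ ~ u₁u₂u₃ ~ u₂u₄²`
theorem addConGen_single_two_three :
    addConGen relations (single 2 3) (single 1 1 + single 3 2) := by
  have h₁ := (addConGen relations).add (AddConGen.Rel.of _ _ (.inl ⟨rfl, rfl⟩))
    ((addConGen relations).refl (single 2 1))
  have h₂ := (addConGen relations).add ((addConGen relations).refl (single 1 1))
    (AddConGen.Rel.of _ _ (.inr ⟨rfl, rfl⟩))
  rw [show single (2 : Fin 4) 3 = single 2 2 + single 2 1 by rw [← single_add]]
  rw [add_left_comm, ← add_assoc] at h₂
  exact h₁.symm.trans h₂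

theorem exists_addConGen_isReduced_of_le {x g g' : Fin 4 →₀ ℕ} (hg : g ≤ x)
    (hgg' : addConGen relations g g') (hw : weight g' < weight g)
    (ih : ∀ y, weight y < weight x → ∃ z, addConGen relations y z ∧ IsReduced z) :
    ∃ z, addConGen relations x z ∧ IsReduced z := by
  rw [← add_tsub_cancel_of_le hg] at ih ⊢
  obtain ⟨z, hz, hred⟩ := ih (g' + (x - g)) (by rw [map_add, map_add]; omega)
  exact ⟨z, ((addConGen relations).add hgg' ((addConGen relations).refl _)).trans hz, hred⟩

theorem exists_addConGen_isReduced (x : Fin 4 →₀ ℕ) :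
    ∃ y, addConGen relations x y ∧ IsReduced y := by
  induction x using (InvImage.wf weight wellFounded_lt).induction with
  | _ x ih =>
  by_cases h₁ : 1 ≤ x 0 ∧ 1 ≤ x 1
  · exact exists_addConGen_isReduced_of_le (le_def.2 fun i ↦ by fin_cases i <;> simp [h₁.1, h₁.2])
      (AddConGen.Rel.of _ _ (.inl ⟨rfl, rfl⟩)) (by simp) ih
  by_cases h₂ : 1 ≤ x 0 ∧ 1 ≤ x 2
  · exact exists_addConGen_isReduced_of_le (le_def.2 fun i ↦ by fin_cases i <;> simp [h₂.1, h₂.2])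
      (AddConGen.Rel.of _ _ (.inr ⟨rfl, rfl⟩)) (by simp) ih
  by_cases h₃ : 3 ≤ x 2
  · exact exists_addConGen_isReduced_of_le (le_def.2 fun i ↦ by fin_cases i <;> simp [h₃])
      addConGen_single_two_three (by simp) ih
  exact ⟨x, (addConGen relations).refl x, by unfold IsReduced; omega⟩

theorem IsReduced.eq_of_embed_eq {x y : Fin 4 →₀ ℕ} (hx : IsReduced x) (hy : IsReduced y)
    (h : embed x = embed y) : x = y := by
  simp only [embed_apply, Prod.mk.injEq] at h
  unfold IsReduced at hx hy
  obtain ⟨h₀, h₁, h₂, h₃⟩ : x 0 = y 0 ∧ x 1 = y 1 ∧ x 2 = y 2 ∧ x 3 = y 3 := by omega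
  ext i
  fin_cases i <;> assumption

theorem addConGen_relations_eq_ker_embed : addConGen relations = AddCon.ker embed := by
  refine le_antisymm addConGen_relations_le_ker_embed fun x y hxy ↦ ?_
  obtain ⟨x', hx, hx'⟩ := exists_addConGen_isReduced x
  obtain ⟨y', hy, hy'⟩ := exists_addConGen_isReduced y
  have hxy' : x' = y' := hx'.eq_of_embed_eq hy' <| (AddCon.ker_rel embed).1 <|
    ((addConGen_relations_le_ker_embed hx).symm.trans hxy).trans
      (addConGen_relations_le_ker_embed hy)
  exact hx.trans (hxy' ▸ hy.symm)

instance : UniqueSums (AddCon.ker embed).Quotient :=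
  .of_injective_addHom (AddCon.kerLift embed).toAddHom (AddCon.kerLift_injective embed)
    inferInstance

instance : IsCancelAdd (AddCon.ker embed).Quotient := UniqueSums.toIsCancelAdd

theorem two_nsmul_u₂u₄ :
    2 • ((single 1 1 + single 3 1 : Fin 4 →₀ ℕ) : (AddCon.ker embed).Quotient) =
      ↑(single 1 1 + single 2 1 : Fin 4 →₀ ℕ) + 2 • ↑(single 2 1 : Fin 4 →₀ ℕ) :=
  AddCon.kerLift_injective embed (by simp)

theorem embed_ne (z : Fin 4 →₀ ℕ) : embed z ≠ (-2, 3) := by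
  simp only [embed_apply, ne_eq, Prod.mk.injEq]
  omega

theorem add_u₃_ne_u₂u₄ (s : (AddCon.ker embed).Quotient) :
    s + ↑(single 2 1 : Fin 4 →₀ ℕ) ≠ ↑(single 1 1 + single 3 1 : Fin 4 →₀ ℕ) := by
  induction s using AddCon.induction_on with
  | _ z =>
  rw [← AddCon.coe_add, ne_eq, AddCon.eq, AddCon.ker_rel, map_add]
  exact fun h ↦ embed_ne z ((eq_sub_of_add_eq h).trans (by simp))

end TwoRelationMonoid

theorem stmt13 (K : Type*) [Field K]
    (c : AddCon (Fin 4 →₀ ℕ))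
    (hc : c = addConGen (fun x y =>
      (x = Finsupp.single (0 : Fin 4) 1 + Finsupp.single 1 1 ∧
        y = Finsupp.single (2 : Fin 4) 2) ∨
      (x = Finsupp.single (0 : Fin 4) 1 + Finsupp.single 2 1 ∧
        y = Finsupp.single (3 : Fin 4) 2))) :
    IsDomain (AddMonoidAlgebra K c.Quotient) ∧
      ¬ IsIntegrallyClosed (AddMonoidAlgebra K c.Quotient) := by
  obtain rfl : c = AddCon.ker TwoRelationMonoid.embed :=
    hc.trans TwoRelationMonoid.addConGen_relations_eq_ker_embed
  exact ⟨inferInstance, AddMonoidAlgebra.not_isIntegrallyClosed_of_nsmul_eq two_ne_zero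
    TwoRelationMonoid.two_nsmul_u₂u₄ TwoRelationMonoid.add_u₃_ne_u₂u₄⟩
end
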